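/- Weak duality for the design problem: let K ⊂ ℝⁿ be compact, and suppose y is the moment vector up to degree 2d of a positive measure μ on K satisfying Ay = b, and suppose (X, z) satisfy that the polynomial x ↦ (c - A^T z)^T v_{2d}(x) - v_d(x)^T X v_d(x) is nonnegative on K, with X, M_d(y) symmetric. Then c^T y - φ(M_d(y)) ≥ b^T z + φ*(X), where φ is concave with concave conjugate φ*. -/

import Mathlib

/-!
Integrate the certificate `v_dᵀ X v_d ≤ (c - Aᵀ z)ᵀ v_{2d}` against `μ`, which lives on `K`.
Since `M_d(y) = ∫ v_d v_dᵀ dμ`, the left side becomes `trace (X M_d(y))`, and the right side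
becomes `(c - Aᵀ z)ᵀ y = cᵀ y - bᵀ z`. As `M_d(y)` is symmetric,
`φ*(X) ≤ trace (X M_d(y)) - φ(M_d(y))`, and adding the two inequalities gives the claim.
-/

open MeasureTheory Matrix

noncomputable section

/-- multi-indices in `n` variables of total degree at most `d` -/
def Idx (n d : ℕ) := {α : Fin n → Fin (d+1) // ∑ i, (α i : ℕ) ≤ d}

instance (n d : ℕ) : Fintype (Idx n d) := by unfold Idx; infer_instance
instance (n d : ℕ) : DecidableEq (Idx n d) := by unfold Idx; infer_instance

/-- vector of monomials of degree at most `d`, evaluated at `x` -/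
def mono (n d : ℕ) (x : Fin n → ℝ) : Idx n d → ℝ := fun α => ∏ i, x i ^ (α.1 i : ℕ)

/-- moment matrix `M_d(μ) = ∫ v_d v_dᵀ dμ` of a measure `μ` -/
def momentMatrix (n d : ℕ) (μ : Measure (Fin n → ℝ)) : Matrix (Idx n d) (Idx n d) ℝ :=
  Matrix.of fun α β => ∫ x, mono n d x α * mono n d x β ∂μ

/-- sum of two multi-indices of degree ≤ d, as a multi-index of degree ≤ 2d -/
def addIdx {n d : ℕ} (α β : Idx n d) : Idx n (2*d) :=
  ⟨fun i => ⟨(α.1 i : ℕ) + (β.1 i : ℕ), by have := (α.1 i).isLt; have := (β.1 i).isLt; omega⟩,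
    by
      have hs : ∑ i, (((fun i => (⟨(α.1 i : ℕ) + (β.1 i : ℕ), by have := (α.1 i).isLt; have := (β.1 i).isLt; omega⟩ : Fin (2*d+1))) i : ℕ)) = (∑ i, (α.1 i : ℕ)) + ∑ i, (β.1 i : ℕ) := by
        simp [Finset.sum_add_distrib]
      rw [hs]
      have := α.2; have := β.2; omega⟩

/-- moment matrix `M_d(y)` built linearly from a moment vector `y` of degree up to `2d` -/
def momentMatrixVec (n d : ℕ) (y : Idx n (2*d) → ℝ) : Matrix (Idx n d) (Idx n d) ℝ :=
  Matrix.of fun α β => y (addIdx α β)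

section MomentIntegrals

variable {E ι : Type*} [MeasurableSpace E] {μ : Measure E} [Fintype ι]

theorem integrable_dotProduct (c : ι → ℝ) {f : E → ι → ℝ}
    (hf : ∀ i, Integrable (fun x => f x i) μ) : Integrable (fun x => c ⬝ᵥ f x) μ :=
  integrable_finsetSum _ fun i _ => (hf i).const_mul (c i)

theorem integral_dotProduct (c : ι → ℝ) {f : E → ι → ℝ}
    (hf : ∀ i, Integrable (fun x => f x i) μ) :
    ∫ x, c ⬝ᵥ f x ∂μ = c ⬝ᵥ fun i => ∫ x, f x i ∂μ := by
  simp only [dotProduct]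
  rw [integral_finsetSum _ fun i _ => (hf i).const_mul (c i)]
  simp only [integral_const_mul]

theorem dotProduct_mulVec_self_eq (X : Matrix ι ι ℝ) (v : ι → ℝ) :
    v ⬝ᵥ X *ᵥ v = (fun p : ι × ι => X p.1 p.2) ⬝ᵥ fun p => v p.1 * v p.2 := by
  simp only [dotProduct, mulVec, Fintype.sum_prod_type, Finset.mul_sum]
  refine Finset.sum_congr rfl fun i _ => Finset.sum_congr rfl fun j _ => ?_
  ring

theorem trace_mul_transpose_eq (X M : Matrix ι ι ℝ) :
    trace (X * Mᵀ) = (fun p : ι × ι => X p.1 p.2) ⬝ᵥ fun p => M p.1 p.2 := by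
  simp only [trace, diag, mul_apply, transpose_apply, dotProduct, Fintype.sum_prod_type]

theorem integrable_dotProduct_mulVec_self (X : Matrix ι ι ℝ) {v : E → ι → ℝ}
    (hv : ∀ i j, Integrable (fun x => v x i * v x j) μ) :
    Integrable (fun x => v x ⬝ᵥ X *ᵥ v x) μ := by
  simp only [dotProduct_mulVec_self_eq X]
  exact integrable_dotProduct _ fun p => hv p.1 p.2

theorem integral_dotProduct_mulVec_self (X : Matrix ι ι ℝ) {v : E → ι → ℝ}
    (hv : ∀ i j, Integrable (fun x => v x i * v x j) μ) :
    ∫ x, v x ⬝ᵥ X *ᵥ v x ∂μ = trace (X * of fun i j => ∫ x, v x i * v x j ∂μ) := by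
  have hsymm :
      (of fun i j => ∫ x, v x i * v x j ∂μ)ᵀ = of fun i j => ∫ x, v x i * v x j ∂μ := by
    ext i j
    simp only [transpose_apply, of_apply, mul_comm]
  simp only [dotProduct_mulVec_self_eq X]
  rw [integral_dotProduct (f := fun x (p : ι × ι) => v x p.1 * v x p.2) _ fun p => hv p.1 p.2,
    ← hsymm, trace_mul_transpose_eq]
  rfl

end MomentIntegrals

theorem dotProduct_sub_transpose_mulVec {ι κ : Type*} [Fintype ι] [Fintype κ]
    (A : Matrix κ ι ℝ) (c y : ι → ℝ) (z : κ → ℝ) :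
    (c - Aᵀ *ᵥ z) ⬝ᵥ y = c ⬝ᵥ y - (A *ᵥ y) ⬝ᵥ z := by
  rw [sub_dotProduct, mulVec_transpose, ← dotProduct_mulVec, dotProduct_comm z]

theorem addIdx_comm {n d : ℕ} (α β : Idx n d) : addIdx α β = addIdx β α :=
  Subtype.ext <| funext fun _ => Fin.ext (Nat.add_comm _ _)

theorem mono_addIdx {n d : ℕ} (x : Fin n → ℝ) (α β : Idx n d) :
    mono n (2*d) x (addIdx α β) = mono n d x α * mono n d x β := by
  simp only [mono, addIdx, pow_add, Finset.prod_mul_distrib]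

theorem momentMatrixVec_isSymm {n d : ℕ} (y : Idx n (2*d) → ℝ) :
    (momentMatrixVec n d y).IsSymm := by
  ext α β
  simp only [momentMatrixVec, transpose_apply, of_apply, addIdx_comm]

theorem momentMatrixVec_eq_momentMatrix {n d : ℕ} {μ : Measure (Fin n → ℝ)}
    {y : Idx n (2*d) → ℝ} (hy : ∀ γ, y γ = ∫ x, mono n (2*d) x γ ∂μ) :
    momentMatrixVec n d y = momentMatrix n d μ := by
  ext α β
  simp only [momentMatrixVec, momentMatrix, of_apply, hy, mono_addIdx]

theorem weak_duality_general (n d m : ℕ) (K : Set (Fin n → ℝ))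
    (μ : Measure (Fin n → ℝ)) (hμK : μ Kᶜ = 0)
    (hInt2 : ∀ γ : Idx n (2*d), Integrable (fun x => mono n (2*d) x γ) μ)
    (y : Idx n (2*d) → ℝ) (hy : ∀ γ, y γ = ∫ x, mono n (2*d) x γ ∂μ)
    (A : Matrix (Fin m) (Idx n (2*d)) ℝ) (b : Fin m → ℝ) (c : Idx n (2*d) → ℝ)
    (hAy : A.mulVec y = b)
    (φ : Matrix (Idx n d) (Idx n d) ℝ → ℝ)
    (X : Matrix (Idx n d) (Idx n d) ℝ) (z : Fin m → ℝ)
    (hpos : ∀ x ∈ K, mono n d x ⬝ᵥ X.mulVec (mono n d x)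
      ≤ ∑ γ, (c γ - Aᵀ.mulVec z γ) * mono n (2*d) x γ)
    (hbdd : BddBelow {t : ℝ | ∃ Y : Matrix (Idx n d) (Idx n d) ℝ, Y.IsSymm ∧
      t = Matrix.trace (X * Y) - φ Y}) :
    b ⬝ᵥ z + sInf {t : ℝ | ∃ Y : Matrix (Idx n d) (Idx n d) ℝ, Y.IsSymm ∧
        t = Matrix.trace (X * Y) - φ Y}
      ≤ c ⬝ᵥ y - φ (momentMatrixVec n d y) := by
  set M := momentMatrixVec n d y
  have hM : M = momentMatrix n d μ := momentMatrixVec_eq_momentMatrix hy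
  have hprod : ∀ α β, Integrable (fun x => mono n d x α * mono n d x β) μ := fun α β => by
    simpa only [mono_addIdx] using hInt2 (addIdx α β)
  have hcert : trace (X * M) ≤ c ⬝ᵥ y - b ⬝ᵥ z := calc
    trace (X * M) = ∫ x, mono n d x ⬝ᵥ X *ᵥ mono n d x ∂μ := by
      rw [hM]; exact (integral_dotProduct_mulVec_self X hprod).symm
    _ ≤ ∫ x, (c - Aᵀ *ᵥ z) ⬝ᵥ mono n (2*d) x ∂μ :=
      integral_mono_ae (integrable_dotProduct_mulVec_self X hprod) (integrable_dotProduct _ hInt2)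
        ((show ∀ᵐ x ∂μ, x ∈ K from mem_ae_iff.2 hμK).mono hpos)
    _ = (c - Aᵀ *ᵥ z) ⬝ᵥ y := by rw [integral_dotProduct _ hInt2, funext hy]
    _ = c ⬝ᵥ y - b ⬝ᵥ z := by rw [dotProduct_sub_transpose_mulVec, hAy]
  have hinf : sInf _ ≤ trace (X * M) - φ M :=
    csInf_le hbdd ⟨M, momentMatrixVec_isSymm y, rfl⟩
  linarith

/-- weak duality for the optimal design problem. -/
theorem weak_duality (n d m : ℕ) (K : Set (Fin n → ℝ)) (hK : IsCompact K)
    (μ : Measure (Fin n → ℝ)) (hμK : μ Kᶜ = 0)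
    (hInt2 : ∀ γ : Idx n (2*d), Integrable (fun x => mono n (2*d) x γ) μ)
    (hInt : ∀ α β : Idx n d, Integrable (fun x => mono n d x α * mono n d x β) μ)
    (y : Idx n (2*d) → ℝ) (hy : ∀ γ, y γ = ∫ x, mono n (2*d) x γ ∂μ)
    (A : Matrix (Fin m) (Idx n (2*d)) ℝ) (b : Fin m → ℝ) (c : Idx n (2*d) → ℝ)
    (hAy : A.mulVec y = b)
    (φ : Matrix (Idx n d) (Idx n d) ℝ → ℝ)
    (hconc : ∀ (Y₁ Y₂ : Matrix (Idx n d) (Idx n d) ℝ), Y₁.IsSymm → Y₂.IsSymm →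
      ∀ t : ℝ, 0 ≤ t → t ≤ 1 →
        t * φ Y₁ + (1 - t) * φ Y₂ ≤ φ (t • Y₁ + (1 - t) • Y₂))
    (X : Matrix (Idx n d) (Idx n d) ℝ) (hX : X.IsSymm) (z : Fin m → ℝ)
    (hpos : ∀ x ∈ K, mono n d x ⬝ᵥ X.mulVec (mono n d x)
      ≤ ∑ γ, (c γ - Aᵀ.mulVec z γ) * mono n (2*d) x γ)
    (hbdd : BddBelow {t : ℝ | ∃ Y : Matrix (Idx n d) (Idx n d) ℝ, Y.IsSymm ∧
      t = Matrix.trace (X * Y) - φ Y}) :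
    b ⬝ᵥ z + sInf {t : ℝ | ∃ Y : Matrix (Idx n d) (Idx n d) ℝ, Y.IsSymm ∧
        t = Matrix.trace (X * Y) - φ Y}
      ≤ c ⬝ᵥ y - φ (momentMatrixVec n d y) :=
  weak_duality_general n d m K μ hμK hInt2 y hy A b c hAy φ X z hpos hbdd
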